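/- Let M be an invertible n × n matrix over a field k such that for all indices i, j, k with k ≠ i one has M_{j i} · (M⁻¹)_{k j} = 0. Then every row of M contains exactly one nonzero entry (i.e. M is a monomial matrix). -/

import Mathlib

namespace Matrix

variable {m n R : Type*} [Fintype n] [DecidableEq m] [Ring R]

theorem exists_mul_apply_ne_zero_of_mul_eq_one [Nontrivial R] {M : Matrix m n R}
    {N : Matrix n m R} (hMN : M * N = 1) (j : m) : ∃ i, M j i * N i j ≠ 0 := by
  obtain ⟨i, -, hi⟩ := Finset.exists_ne_zero_of_sum_ne_zero <|
    show ∑ i, M j i * N i j ≠ 0 by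
      rw [← mul_apply, hMN, one_apply_eq]
      exact one_ne_zero
  exact ⟨i, hi⟩

/-- The entry `i` of row `j` singled out by `M j i * N i j ≠ 0` is the only nonzero one:
any other nonzero `M j i'` would force `N i j = 0`. -/
theorem existsUnique_ne_zero_of_mul_eq_one [IsDomain R] {M : Matrix m n R} {N : Matrix n m R}
    (hMN : M * N = 1) (h : ∀ i j l, l ≠ i → M j i * N l j = 0) (j : m) :
    ∃! i, M j i ≠ 0 := by
  obtain ⟨i, hi⟩ := exists_mul_apply_ne_zero_of_mul_eq_one hMN j
  refine ⟨i, left_ne_zero_of_mul hi, fun i' hi' => ?_⟩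
  by_contra hne
  have hN : N i j = 0 := (mul_eq_zero.mp (h i' j i (Ne.symm hne))).resolve_left hi'
  exact hi (by rw [hN, mul_zero])

end Matrix

/-- If `M` is invertible and `M j i * (M⁻¹) l j = 0` whenever `l ≠ i`, then every
row of `M` has exactly one nonzero entry. -/
theorem stmt_7 (k : Type*) [Field k] {n : ℕ} (M : Matrix (Fin n) (Fin n) k)
    (hM : IsUnit M)
    (h : ∀ i j l : Fin n, l ≠ i → M j i * M⁻¹ l j = 0) :
    ∀ j : Fin n, ∃! i : Fin n, M j i ≠ 0 :=
  Matrix.existsUnique_ne_zero_of_mul_eq_one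
    (M.mul_nonsing_inv ((M.isUnit_iff_isUnit_det).mp hM)) h
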